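/- Let F be a weakly union-closed family of nonempty subsets of a finite set N covering N, ordered by containment, and let v: F → ℝ be any valuation with representation v = Σ_{F∈F} β_F ζ^F. Then for every f ∈ ℝ^N₊, the Choquet integral satisfies ∫_F f dv = Σ_{F∈F} β_F · min_{i∈F} f_i. -/

import Mathlib

/-!
For nonnegative weights `α`, putting mass `α F` on a minimiser of `f` in `F` is feasible for the
linear program and has value `∑ F, α F * min_F f`. Conversely, for a feasible `x`, write `f` as a
sum of layers `c • 1_P` with `P` shrinking: a layer contributes `c * ∑_{F ⊆ P} α F` on one side and
`c * x(P)` on the other, and `x(P)` dominates `∑_{F ⊆ P} α F` because the maximal members of the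
family inside `P` are pairwise disjoint by weak union-closedness. Applying this to `v⁺` and `v⁻`
gives the formula for `v`.
-/

open scoped Classical

open Finset

section

variable {N : Type*} [DecidableEq N]

def WeaklyUnionClosed (Fam : Finset (Finset N)) : Prop :=
  ∀ F ∈ Fam, ∀ G ∈ Fam, (F ∩ G).Nonempty → F ∪ G ∈ Fam

/-- The belief function `∑ F, α F • ζ^F`. -/
def belief (Fam : Finset (Finset N)) (α : Finset N → ℝ) (G : Finset N) : ℝ :=
  ∑ F ∈ Fam with F ⊆ G, α F

/-- The objective values of the linear program whose minimum is the Choquet integral `∫ f dw`. -/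
def coverValues [Fintype N] (Fam : Finset (Finset N)) (w : Finset N → ℝ) (f : N → ℝ) : Set ℝ :=
  {r | ∃ x : N → ℝ, (∀ a, 0 ≤ x a) ∧ (∀ G ∈ Fam, w G ≤ ∑ a ∈ G, x a) ∧ r = ∑ a, f a * x a}

def choquetSum (Fam : Finset (Finset N)) (hne : ∀ F ∈ Fam, F.Nonempty) (α : Finset N → ℝ)
    (f : N → ℝ) : ℝ :=
  ∑ F ∈ Fam.attach, α F.1 * F.1.inf' (hne F.1 F.2) f

variable {Fam : Finset (Finset N)}

theorem WeaklyUnionClosed.disjoint_of_maximal (hFam : WeaklyUnionClosed Fam) {P H H' : Finset N}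
    (hH : Maximal (· ∈ Fam.filter (· ⊆ P)) H) (hH' : Maximal (· ∈ Fam.filter (· ⊆ P)) H')
    (hHH' : H ≠ H') : Disjoint H H' := by
  obtain ⟨hHFam, hHP⟩ := mem_filter.1 hH.1
  obtain ⟨hH'Fam, hH'P⟩ := mem_filter.1 hH'.1
  rw [disjoint_iff_inter_eq_empty]
  by_contra hinter
  have hU : H ∪ H' ∈ Fam.filter (· ⊆ P) := mem_filter.2
    ⟨hFam _ hHFam _ hH'Fam (nonempty_iff_ne_empty.2 hinter), union_subset hHP hH'P⟩
  exact hHH' ((hH.eq_of_le hU subset_union_left).trans (hH'.eq_of_le hU subset_union_right).symm)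

theorem WeaklyUnionClosed.belief_le_sum (hFam : WeaklyUnionClosed Fam) {α : Finset N → ℝ}
    (hα : ∀ F, 0 ≤ α F) {x : N → ℝ} (hx : ∀ a, 0 ≤ x a)
    (hcon : ∀ G ∈ Fam, belief Fam α G ≤ ∑ a ∈ G, x a) (P : Finset N) :
    belief Fam α P ≤ ∑ a ∈ P, x a := by
  set S := Fam.filter (· ⊆ P)
  set M := S.filter (Maximal (· ∈ S))
  have hmax : ∀ F, ∃ H, F ∈ S → F ⊆ H ∧ H ∈ M := fun F => by
    by_cases hF : F ∈ S
    · obtain ⟨H, hFH, hH⟩ := S.exists_le_maximal hF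
      exact ⟨H, fun _ => ⟨hFH, mem_filter.2 ⟨hH.1, hH⟩⟩⟩
    · exact ⟨F, fun h => absurd h hF⟩
  choose top htop using hmax
  have hMdisj : (M : Set (Finset N)).PairwiseDisjoint id := fun H hH H' hH' hHH' =>
    hFam.disjoint_of_maximal (mem_filter.1 hH).2 (mem_filter.1 hH').2 hHH'
  calc belief Fam α P = ∑ H ∈ M, ∑ F ∈ S with top F = H, α F :=
        (sum_fiberwise_of_maps_to (fun F hF => (htop F hF).2) _).symm
    _ ≤ ∑ H ∈ M, belief Fam α H := by
        refine sum_le_sum fun H _ => sum_le_sum_of_subset_of_nonneg ?_ fun F _ _ => hα F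
        intro F hF
        obtain ⟨hFS, rfl⟩ := mem_filter.1 hF
        exact mem_filter.2 ⟨(mem_filter.1 hFS).1, (htop F hFS).1⟩
    _ ≤ ∑ H ∈ M, ∑ a ∈ H, x a :=
        sum_le_sum fun H hH => hcon H (mem_filter.1 (mem_filter.1 hH).1).1
    _ = ∑ a ∈ M.biUnion id, x a := (sum_biUnion hMdisj).symm
    _ ≤ ∑ a ∈ P, x a := by
        refine sum_le_sum_of_subset_of_nonneg ?_ fun a _ _ => hx a
        intro a ha
        obtain ⟨H, hH, haH⟩ := mem_biUnion.1 ha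
        exact (mem_filter.1 (mem_filter.1 hH).1).2 haH

theorem inf'_add_indicator {F P : Finset N} (hF : F.Nonempty) {g : N → ℝ} (hg : ∀ a, 0 ≤ g a)
    (hgP : ∀ a ∉ P, g a = 0) {c : ℝ} (hc : 0 ≤ c) :
    F.inf' hF (fun a => g a + if a ∈ P then c else 0) = F.inf' hF g + if F ⊆ P then c else 0 := by
  by_cases hFP : F ⊆ P
  · rw [if_pos hFP, inf'_congr hF rfl fun a ha => by rw [if_pos (hFP ha)]]
    exact (apply_inf'_eq_inf'_comp hF (· + c) fun _ _ => (min_add_add_right _ _ _).symm).symm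
  · obtain ⟨a, haF, haP⟩ := not_subset.1 hFP
    have hzero : ∀ {h : N → ℝ}, (∀ b, 0 ≤ h b) → h a = 0 → F.inf' hF h = 0 := fun hh ha =>
      le_antisymm (ha ▸ inf'_le _ haF) (le_inf' hF _ fun b _ => hh b)
    rw [if_neg hFP, add_zero, hzero (fun b => add_nonneg (hg b) (by split_ifs <;> simp [hc]))
      (by simp [haP, hgP a haP]), hzero hg (hgP a haP)]

theorem choquetSum_add_indicator (hne : ∀ F ∈ Fam, F.Nonempty) (α : Finset N → ℝ) {P : Finset N}
    {g : N → ℝ} (hg : ∀ a, 0 ≤ g a) (hgP : ∀ a ∉ P, g a = 0) {c : ℝ} (hc : 0 ≤ c) :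
    choquetSum Fam hne α (fun a => g a + if a ∈ P then c else 0) =
      choquetSum Fam hne α g + c * belief Fam α P := by
  simp only [choquetSum, inf'_add_indicator _ hg hgP hc, mul_add, sum_add_distrib, belief,
    mul_sum, sum_filter]
  congr 1
  rw [sum_attach Fam fun F => α F * if F ⊆ P then c else 0]
  exact sum_congr rfl fun F _ => by split_ifs <;> ring

theorem choquetSum_le_of_forall_belief_le [Fintype N] (hFam : WeaklyUnionClosed Fam)
    (hne : ∀ F ∈ Fam, F.Nonempty) {α : Finset N → ℝ} (hα : ∀ F, 0 ≤ α F) {x : N → ℝ}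
    (hx : ∀ a, 0 ≤ x a) (hcon : ∀ G ∈ Fam, belief Fam α G ≤ ∑ a ∈ G, x a) (P : Finset N) :
    ∀ f : N → ℝ, (∀ a, 0 ≤ f a) → (∀ a ∉ P, f a = 0) →
      choquetSum Fam hne α f ≤ ∑ a, f a * x a := by
  induction P using Finset.strongInduction with | H P ih => ?_
  intro f hf hfP
  rcases P.eq_empty_or_nonempty with rfl | hP
  · obtain rfl : f = fun _ => 0 := funext fun a => hfP a (notMem_empty a)
    simp [choquetSum]
  obtain ⟨a₀, ha₀, hm⟩ := P.exists_mem_eq_inf' hP f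
  set m := P.inf' hP f
  set g : N → ℝ := fun a => if a ∈ P then f a - m else 0
  have hg : ∀ a, 0 ≤ g a := fun a => by
    by_cases ha : a ∈ P
    · simpa [g, ha] using inf'_le f ha
    · simp [g, ha]
  have hgP : ∀ a ∉ P.erase a₀, g a = 0 := fun a ha => by
    by_cases haP : a ∈ P
    · simp [g, show a = a₀ by simpa [haP] using ha, hm]
    · simp [g, haP]
  have hfg : f = fun a => g a + if a ∈ P then m else 0 := funext fun a => by
    by_cases ha : a ∈ P
    · simp [g, ha]
    · simp [g, ha, hfP a ha]
  have hm0 : 0 ≤ m := hm ▸ hf a₀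
  calc choquetSum Fam hne α f = choquetSum Fam hne α g + m * belief Fam α P := by
        rw [hfg, choquetSum_add_indicator hne α hg (fun a ha => by simp [g, ha]) hm0]
    _ ≤ ∑ a, g a * x a + m * ∑ a ∈ P, x a := by
        gcongr
        · exact ih _ (erase_ssubset ha₀) g hg hgP
        · exact hFam.belief_le_sum hα hx hcon P
    _ = ∑ a, f a * x a := by
        rw [hfg]
        simp only [add_mul, sum_add_distrib, ite_mul, zero_mul, sum_ite_mem, univ_inter, mul_sum]

theorem choquetSum_mem_coverValues [Fintype N] (hne : ∀ F ∈ Fam, F.Nonempty) {α : Finset N → ℝ}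
    (hα : ∀ F, 0 ≤ α F) (f : N → ℝ) :
    choquetSum Fam hne α f ∈ coverValues Fam (belief Fam α) f := by
  choose i hiF hi using fun F : Fam => F.1.exists_mem_eq_inf' (hne F.1 F.2) f
  refine ⟨fun a => ∑ F ∈ Fam.attach, if a = i F then α F.1 else 0,
    fun a => sum_nonneg fun F _ => by split_ifs <;> simp [hα], fun G _ => ?_, ?_⟩
  · rw [sum_comm]
    simp only [sum_ite_eq', belief, sum_filter]
    rw [← sum_attach Fam fun F => if F ⊆ G then α F else 0]
    exact sum_le_sum fun F _ => by
      split_ifs with h h' <;> first | exact le_rfl | exact hα _ | exact absurd (h (hiF F)) h'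
  · simp only [mul_sum, mul_ite, mul_zero, choquetSum, hi]
    rw [sum_comm]
    simp [mul_comm]

theorem isLeast_coverValues_choquetSum [Fintype N] (hFam : WeaklyUnionClosed Fam)
    (hne : ∀ F ∈ Fam, F.Nonempty) {α : Finset N → ℝ} (hα : ∀ F, 0 ≤ α F) {f : N → ℝ}
    (hf : ∀ a, 0 ≤ f a) :
    IsLeast (coverValues Fam (belief Fam α) f) (choquetSum Fam hne α f) := by
  refine ⟨choquetSum_mem_coverValues hne hα f, ?_⟩
  rintro r ⟨x, hx, hcon, rfl⟩
  exact choquetSum_le_of_forall_belief_le hFam hne hα hx hcon univ f hf fun a ha =>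
    absurd (mem_univ a) ha

theorem belief_posPart (Fam : Finset (Finset N)) (β : Finset N → ℝ) :
    belief Fam (fun F => (β F)⁺) = fun G => ∑ F ∈ Fam with F ⊆ G ∧ 0 ≤ β F, β F := by
  ext G
  rw [belief, ← filter_filter, sum_filter (fun F => 0 ≤ β F)]
  simp only [posPart_eq_ite]

theorem belief_negPart (Fam : Finset (Finset N)) (β : Finset N → ℝ) :
    belief Fam (fun F => (β F)⁻) = fun G => ∑ F ∈ Fam with F ⊆ G ∧ β F < 0, -β F := by
  ext G
  rw [belief, ← filter_filter, sum_filter (fun F => β F < 0)]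
  simp only [negPart_eq_ite_lt]

end

theorem stmt_10 {N : Type*} [Fintype N] [DecidableEq N]
    (Fam : Finset (Finset N)) (hne : ∀ F ∈ Fam, F.Nonempty)
    (hwuc : ∀ F ∈ Fam, ∀ G ∈ Fam, (F ∩ G).Nonempty → F ∪ G ∈ Fam)
    (β : Finset N → ℝ) (f : N → ℝ) (hf : ∀ a, 0 ≤ f a)
    (Ip Im : ℝ)
    (hIp : IsLeast {r : ℝ | ∃ x : N → ℝ, (∀ a, 0 ≤ x a) ∧
        (∀ G ∈ Fam, (∑ F ∈ Fam.filter (fun F => F ⊆ G ∧ 0 ≤ β F), β F) ≤ ∑ a ∈ G, x a) ∧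
        r = ∑ a, f a * x a} Ip)
    (hIm : IsLeast {r : ℝ | ∃ x : N → ℝ, (∀ a, 0 ≤ x a) ∧
        (∀ G ∈ Fam, (∑ F ∈ Fam.filter (fun F => F ⊆ G ∧ β F < 0), -β F) ≤ ∑ a ∈ G, x a) ∧
        r = ∑ a, f a * x a} Im) :
    Ip - Im = ∑ F ∈ Fam.attach, β F.1 * F.1.inf' (hne F.1 F.2) f := by
  have hpos := isLeast_coverValues_choquetSum hwuc hne (fun F => posPart_nonneg (β F)) hf
  have hneg := isLeast_coverValues_choquetSum hwuc hne (fun F => negPart_nonneg (β F)) hf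
  rw [belief_posPart] at hpos
  rw [belief_negPart] at hneg
  rw [hIp.unique hpos, hIm.unique hneg, choquetSum, choquetSum, ← sum_sub_distrib]
  simp only [← sub_mul, posPart_sub_negPart]
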